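/- Let α, α' be i.i.d. square-integrable random variables, let l, Z, Y be random variables with l, Z, α', α, and Y - M mutually independent (M a constant). Define S = l + Z - M + α' and X = M - α' + (Y - M) + α. Then E[S·X] = E[S]·E[Y] - Var(α). -/

import Mathlib

open MeasureTheory ProbabilityTheory

/-!
Write `V = (l, Z, α', α, R)`. Up to additive constants, `S` and `X` are the linear forms
`l + Z + α'` and `R + α - α'` in `V`, and for pairwise independent coordinates the covariance of
two linear forms only sees the diagonal, so `cov[S, X] = -Var[α'] = -Var[α]`. Moreover
`X = Y + (α - α')` has the same mean as `Y`, and `E[S X] = cov[S, X] + E[S] E[X]`.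
-/

namespace ProbabilityTheory

variable {Ω ι : Type*} [MeasurableSpace Ω] {μ : Measure Ω}

lemma covariance_fun_sum_mul_fun_sum_mul_of_pairwise_indepFun [IsFiniteMeasure μ]
    [Fintype ι] {V : ι → Ω → ℝ} (hV : ∀ i, MemLp (V i) 2 μ)
    (hindep : Pairwise fun i j ↦ V i ⟂ᵢ[μ] V j) (a b : ι → ℝ) :
    cov[fun ω ↦ ∑ i, a i * V i ω, fun ω ↦ ∑ j, b j * V j ω; μ]
      = ∑ i, a i * b i * Var[V i; μ] := by
  rw [covariance_fun_sum_fun_sum (fun i ↦ (hV i).const_mul (a i))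
    (fun j ↦ (hV j).const_mul (b j))]
  refine Finset.sum_congr rfl fun i _ ↦ ?_
  rw [Finset.sum_eq_single_of_mem i (Finset.mem_univ i) fun j _ hji ↦ ?_]
  · rw [covariance_const_mul_left, covariance_const_mul_right,
      covariance_self (hV i).aemeasurable]
    ring
  · rw [covariance_const_mul_left, covariance_const_mul_right,
      (hindep hji.symm).covariance_eq_zero (hV i) (hV j), mul_zero, mul_zero]

lemma IdentDistrib.integral_add_sub_eq {Y A B : Ω → ℝ} (h : IdentDistrib A B μ μ)
    (hY : Integrable Y μ) (hA : Integrable A μ) :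
    ∫ ω, (Y + (A - B)) ω ∂μ = ∫ ω, Y ω ∂μ := by
  have hB : Integrable B μ := h.integrable_iff.mp hA
  rw [integral_add' hY (hA.sub hB), integral_sub' hA hB, h.integral_eq, sub_self, add_zero]

end ProbabilityTheory

/-- Lemma 2: with `S = l + Z - M + α'`, `X = M - α' + (Y - M) + α`, `Y = R + M`,
`α, α'` i.i.d., and `l, Z, α', α, R` mutually independent,
`E[S·X] = E[S]·E[Y] - Var(α)`. -/
theorem stmt_5 {Ω : Type*} [MeasurableSpace Ω] (μ : Measure Ω) [IsProbabilityMeasure μ]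
    (l Z α' α R : Ω → ℝ) (M : ℝ)
    (hl : MemLp l 2 μ) (hZ : MemLp Z 2 μ) (hα' : MemLp α' 2 μ)
    (hα : MemLp α 2 μ) (hR : MemLp R 2 μ)
    (hid : Measure.map α μ = Measure.map α' μ)
    (hindep : iIndepFun ![l, Z, α', α, R] μ)
    (S X Y : Ω → ℝ)
    (hY : Y = fun ω => R ω + M)
    (hS : S = fun ω => l ω + Z ω - M + α' ω)
    (hX : X = fun ω => M - α' ω + (Y ω - M) + α ω) :
    ∫ ω, S ω * X ω ∂μ = (∫ ω, S ω ∂μ) * (∫ ω, Y ω ∂μ) - variance α μ := by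
  have hident : IdentDistrib α α' μ μ := ⟨hα.aemeasurable, hα'.aemeasurable, hid⟩
  set V := ![l, Z, α', α, R]
  have hV : ∀ i, MemLp (V i) 2 μ := by
    intro i; fin_cases i <;> assumption
  have hlin (c : Fin 5 → ℝ) : MemLp (fun ω ↦ ∑ i, c i * V i ω) 2 μ :=
    memLp_finsetSum _ fun i _ ↦ (hV i).const_mul (c i)
  have hS_sum : S = fun ω ↦ ∑ i, ![1, 1, 1, 0, 0] i * V i ω + -M := by
    funext ω; simp only [hS, V, Fin.sum_univ_five, Matrix.cons_val]; ring
  have hX_sum : X = fun ω ↦ ∑ i, ![0, 0, -1, 1, 1] i * V i ω + M := by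
    funext ω; simp only [hX, hY, V, Fin.sum_univ_five, Matrix.cons_val]; ring
  have hcov : cov[S, X; μ] = -Var[α; μ] := by
    rw [hS_sum, hX_sum, covariance_add_const_left ((hlin _).integrable one_le_two),
      covariance_add_const_right ((hlin _).integrable one_le_two),
      covariance_fun_sum_mul_fun_sum_mul_of_pairwise_indepFun hV
        (fun i j hij ↦ hindep.indepFun hij)]
    simp [V, Fin.sum_univ_five, hident.variance_eq]
  have hmean : ∫ ω, X ω ∂μ = ∫ ω, Y ω ∂μ := by
    have hX_eq : X = Y + (α - α') := by
      funext ω; simp only [hX, Pi.add_apply, Pi.sub_apply]; ring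
    have hY₁ : Integrable Y μ := by
      rw [hY]; exact (hR.integrable one_le_two).add (integrable_const M)
    rw [hX_eq, hident.integral_add_sub_eq hY₁ (hα.integrable one_le_two)]
  have hS₂ : MemLp S 2 μ := by rw [hS_sum]; exact (hlin _).add (memLp_const _)
  have hX₂ : MemLp X 2 μ := by rw [hX_sum]; exact (hlin _).add (memLp_const _)
  have hprod := covariance_eq_sub hS₂ hX₂
  simp only [Pi.mul_apply] at hprod
  rw [← hmean]
  linarith
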